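/- Bound on R_{L1}: Under the setup assumptions together with the interaction condition, define R_{L1}(t_s, t_e) := ∑_{1≤i<j≤l} γ_{ij}(ω₁) ∫_{t_s}^{t_e} ( [f_i, f_j](t_s, x(t_s)) − [f_i, f_j](θ, x(θ)) ) dθ, where γ_{ij}(ω) := (ω^{p_i+p_j}/T) ∫₀^T ∫₀^θ u_j(ωθ) u_i(ωτ) dτ dθ with T := 2π/ω. Then ‖R_{L1}(t_s, t_e)‖ ≤ 2π² (l+1)³ L² Λ₁ ‖x₀‖ ω₁^{p′−1} T₁. -/

import Mathlib

open MeasureTheory Real Filter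

noncomputable section

/-- The state space `ℝ^n`. -/
abbrev E (n : ℕ) := EuclideanSpace ℝ (Fin n)

/-- Lie derivative `L_{f_a} f_b (t,x) = D_x f_b(t,x) [f_a(t,x)]`. -/
def lieDeriv {n : ℕ} (f : ℕ → ℝ → E n → E n)
    (Df : ℕ → ℝ → E n → (E n →L[ℝ] E n)) (a b : ℕ) (t : ℝ) (x : E n) : E n :=
  Df b t x (f a t x)

/-- Second Lie derivative `L_{f_m} L_{f_j} f_i (t,x) = D_x (L_{f_j} f_i)(t,x) [f_m(t,x)]`. -/
def lieDeriv2 {n : ℕ} (f : ℕ → ℝ → E n → E n)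
    (Df : ℕ → ℝ → E n → (E n →L[ℝ] E n))
    (DLf : ℕ → ℕ → ℝ → E n → (E n →L[ℝ] E n)) (m j i : ℕ) (t : ℝ) (x : E n) : E n :=
  DLf j i t x (f m t x)

/-- Lie bracket `[f_i, f_j] = L_{f_i} f_j − L_{f_j} f_i`. -/
def lieBracket {n : ℕ} (f : ℕ → ℝ → E n → E n)
    (Df : ℕ → ℝ → E n → (E n →L[ℝ] E n)) (i j : ℕ) (t : ℝ) (x : E n) : E n :=
  lieDeriv f Df i j t x - lieDeriv f Df j i t x

/-- `γ_{ij}(ω) = (ω^{p_i+p_j}/T) ∫₀^T ∫₀^θ u_j(ωθ) u_i(ωτ) dτ dθ`, `T = 2π/ω`. -/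
def gammaCoeff (p : ℕ → ℝ) (u : ℕ → ℝ → ℝ) (i j : ℕ) (ω : ℝ) : ℝ :=
  ω ^ (p i + p j) / (2 * π / ω) *
    ∫ θ in (0:ℝ)..(2 * π / ω), ∫ τ in (0:ℝ)..θ, u j (ω * θ) * u i (ω * τ)

/-- Regularity of a time-dependent vector field: continuous in the first argument,
globally uniformly `L`-Lipschitz in the second argument, and vanishing at `x = 0`. -/
def RegVF {n : ℕ} (L : ℝ) (g : ℝ → E n → E n) : Prop :=
  (∀ x, Continuous fun t => g t x) ∧
  (∀ t x y, ‖g t x - g t y‖ ≤ L * ‖x - y‖) ∧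
  (∀ t, g t 0 = 0)

/-- Standing assumptions: dither assumptions and vector-field assumptions. -/
structure Hyps {n : ℕ} (l : ℕ)
    (f : ℕ → ℝ → E n → E n)
    (Df : ℕ → ℝ → E n → (E n →L[ℝ] E n))
    (ft : ℕ → ℝ → E n → E n)
    (Lft : ℕ → ℕ → ℝ → E n → E n)
    (DLf : ℕ → ℕ → ℝ → E n → (E n →L[ℝ] E n))
    (u : ℕ → ℝ → ℝ) (p : ℕ → ℝ) (L : ℝ) : Prop where
  hp0 : p 0 = 0
  hu0 : ∀ t, u 0 t = 1
  hp : ∀ i, 1 ≤ i → i ≤ l → p i ∈ Set.Ioo (0:ℝ) 1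
  humeas : ∀ i, i ≤ l → Measurable (u i)
  hubdd : ∀ i, i ≤ l → ∀ t, |u i t| ≤ 1
  huper : ∀ i, i ≤ l → ∀ t, u i (t + 2 * π) = u i t
  huzm : ∀ i, 1 ≤ i → i ≤ l → (∫ t in (0:ℝ)..(2 * π), u i t) = 0
  hLpos : 0 < L
  hDf : ∀ i, i ≤ l → ∀ t x, HasFDerivAt (f i t) (Df i t x) x
  hft : ∀ i, i ≤ l → ∀ x t, HasDerivAt (fun s => f i s x) (ft i t x) t
  hLft : ∀ i j, i ≤ l → j ≤ l → ∀ x t,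
    HasDerivAt (fun s => lieDeriv f Df j i s x) (Lft j i t x) t
  hDLf : ∀ i j, i ≤ l → j ≤ l → ∀ t x,
    HasFDerivAt (fun y => lieDeriv f Df j i t y) (DLf j i t x) x
  hreg_f : ∀ i, i ≤ l → RegVF L (f i)
  hreg_ft : ∀ i, i ≤ l → RegVF L (ft i)
  hreg_Lf : ∀ i j, i ≤ l → j ≤ l → RegVF L (lieDeriv f Df j i)
  hreg_Lft : ∀ i j, i ≤ l → j ≤ l → RegVF L (Lft j i)
  hreg_LLf : ∀ i j m, i ≤ l → j ≤ l → m ≤ l → RegVF L (lieDeriv2 f Df DLf m j i)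

/-- The interaction condition on the powers `p_i` and the Lie brackets. -/
def InteractionCondition {n : ℕ} (l : ℕ) (f : ℕ → ℝ → E n → E n)
    (Df : ℕ → ℝ → E n → (E n →L[ℝ] E n)) (u : ℕ → ℝ → ℝ) (p : ℕ → ℝ) : Prop :=
  ∀ i j, 1 ≤ i → i ≤ l → 1 ≤ j → j ≤ l → 1 < p i + p j →
    (∀ ω : ℝ, 0 < ω → gammaCoeff p u i j ω = 0) ∨
    (∀ (t : ℝ) (x : E n), lieBracket f Df i j t x = 0)

/-- `x` is a (Carathéodory, i.e. integral-form) solution of the input-affine system (S)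
with dither frequency `ω` on the set `s`, with initial time `t₀`. -/
def IsSSol {n : ℕ} (l : ℕ) (f : ℕ → ℝ → E n → E n) (u : ℕ → ℝ → ℝ) (p : ℕ → ℝ)
    (ω : ℝ) (x : ℝ → E n) (s : Set ℝ) (t₀ : ℝ) : Prop :=
  ContinuousOn x s ∧
  ∀ t ∈ s, x t = x t₀ + ∫ τ in t₀..t,
    (f 0 τ (x τ) + ∑ i ∈ Finset.Icc 1 l, (ω ^ p i * u i (ω * τ)) • f i τ (x τ))

/-- `x` is a solution of the associated Lie-bracket system (LBS), with coefficients
`ν i j = lim_{ω → ∞} γ_{ij}(ω)`, on the set `s`, with initial time `t₀`. -/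
def IsLBSSol {n : ℕ} (l : ℕ) (f : ℕ → ℝ → E n → E n)
    (Df : ℕ → ℝ → E n → (E n →L[ℝ] E n)) (ν : ℕ → ℕ → ℝ)
    (x : ℝ → E n) (s : Set ℝ) (t₀ : ℝ) : Prop :=
  ContinuousOn x s ∧
  ∀ t ∈ s, x t = x t₀ + ∫ τ in t₀..t,
    (f 0 τ (x τ) + ∑ i ∈ Finset.Icc 1 l, ∑ j ∈ Finset.Ioc i l,
      ν i j • lieBracket f Df i j τ (x τ))

end
noncomputable section

/-- `V_i(t_s, t_e) = ∫_{t_s}^{t_e} ω₁^{p_i} u_i(ω₁ θ) dθ`. -/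
def Vi (u : ℕ → ℝ → ℝ) (p : ℕ → ℝ) (ω₁ : ℝ) (i : ℕ) (ts te : ℝ) : ℝ :=
  ∫ θ in ts..te, ω₁ ^ p i * u i (ω₁ * θ)

/-- `V_{ij}(t_s, t_e) = ∫_{t_s}^{t_e} ω₁^{p_i} u_i(ω₁ θ) V_j(t_s, θ) dθ`. -/
def Vij (u : ℕ → ℝ → ℝ) (p : ℕ → ℝ) (ω₁ : ℝ) (i j : ℕ) (ts te : ℝ) : ℝ :=
  ∫ θ in ts..te, (ω₁ ^ p i * u i (ω₁ * θ)) * Vi u p ω₁ j ts θ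

/-- The remainder `R(t_s, t_e)`. -/
def Rrem {n : ℕ} (l : ℕ) (f : ℕ → ℝ → E n → E n)
    (Df : ℕ → ℝ → E n → (E n →L[ℝ] E n))
    (DLf : ℕ → ℕ → ℝ → E n → (E n →L[ℝ] E n))
    (u : ℕ → ℝ → ℝ) (p : ℕ → ℝ) (ω₁ : ℝ) (x : ℝ → E n) (ts te : ℝ) : E n :=
  ∑ i ∈ Finset.Icc 1 l, ∑ j ∈ Finset.Icc 0 l, ∑ m ∈ Finset.Icc 0 l,
    ω₁ ^ (p i + p j + p m) •
      ∫ θ in ts..te, u i (ω₁ * θ) •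
        ∫ τ in ts..θ, u j (ω₁ * τ) •
          ∫ σ in ts..τ, u m (ω₁ * σ) • lieDeriv2 f Df DLf m j i σ (x σ)

/-- The term `Q_{V1}(t_s, t_e)`. -/
def QV1 {n : ℕ} (l : ℕ) (ft : ℕ → ℝ → E n → E n)
    (u : ℕ → ℝ → ℝ) (p : ℕ → ℝ) (ω₁ : ℝ) (x : ℝ → E n) (ts te : ℝ) : E n :=
  ∑ i ∈ Finset.Icc 1 l, ω₁ ^ p i •
    ∫ θ in ts..te, u i (ω₁ * θ) • ∫ τ in ts..θ, ft i τ (x τ)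

/-- The term `Q_{V2}(t_s, t_e)`. -/
def QV2 {n : ℕ} (l : ℕ) (Lft : ℕ → ℕ → ℝ → E n → E n)
    (u : ℕ → ℝ → ℝ) (p : ℕ → ℝ) (ω₁ : ℝ) (x : ℝ → E n) (ts te : ℝ) : E n :=
  ∑ i ∈ Finset.Ico 1 l, ∑ j ∈ Finset.Icc 0 l,
    ω₁ ^ (p i + p j) •
      ∫ θ in ts..te, u i (ω₁ * θ) •
        ∫ τ in ts..θ, u j (ω₁ * τ) • ∫ σ in ts..τ, Lft j i σ (x σ)

/-- The term `Q_1(t_s, t_e)`. -/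
def Q1 {n : ℕ} (l : ℕ) (f : ℕ → ℝ → E n → E n)
    (Df : ℕ → ℝ → E n → (E n →L[ℝ] E n))
    (u : ℕ → ℝ → ℝ) (p : ℕ → ℝ) (ω₁ : ℝ) (x : ℝ → E n) (ts te : ℝ) : E n :=
  ∑ i ∈ Finset.Icc 1 l, Vij u p ω₁ i 0 ts te • lieDeriv f Df 0 i ts (x ts)

/-- The term `Q_{1T}(t_s, t_e)`. -/
def Q1T {n : ℕ} (l : ℕ) (f : ℕ → ℝ → E n → E n)
    (Df : ℕ → ℝ → E n → (E n →L[ℝ] E n))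
    (u : ℕ → ℝ → ℝ) (p : ℕ → ℝ) (ω₁ : ℝ) (x : ℝ → E n) (ts te : ℝ) : E n :=
  (∑ i ∈ Finset.Icc 1 l, ∑ j ∈ Finset.Ioc i l,
    (Vi u p ω₁ i ts te * Vi u p ω₁ j ts te) • lieDeriv f Df j i ts (x ts))
  + (1/2 : ℝ) • ∑ i ∈ Finset.Icc 1 l,
      ((Vi u p ω₁ i ts te) ^ 2) • lieDeriv f Df i i ts (x ts)

/-- The term `H(t_s, t_e)`. -/
def Hterm {n : ℕ} (l : ℕ) (f : ℕ → ℝ → E n → E n)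
    (Df : ℕ → ℝ → E n → (E n →L[ℝ] E n))
    (u : ℕ → ℝ → ℝ) (p : ℕ → ℝ) (ω₁ : ℝ) (x : ℝ → E n) (ts te : ℝ) : E n :=
  (∑ i ∈ Finset.Icc 1 l, Vi u p ω₁ i ts te • f i ts (x ts))
  + ∑ i ∈ Finset.Icc 1 l, ∑ j ∈ Finset.Ioc i l,
      Vij u p ω₁ j i ts te • lieBracket f Df i j ts (x ts)

/-- The term `I(t_s, t_e)`. -/
def Iterm {n : ℕ} (l : ℕ) (f : ℕ → ℝ → E n → E n)
    (Df : ℕ → ℝ → E n → (E n →L[ℝ] E n))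
    (u : ℕ → ℝ → ℝ) (p : ℕ → ℝ) (ω₁ : ℝ) (x : ℝ → E n) (ts te : ℝ) : E n :=
  ∫ θ in ts..te, ∑ i ∈ Finset.Icc 1 l, ∑ j ∈ Finset.Ioc i l,
    gammaCoeff p u i j ω₁ • lieBracket f Df i j θ (x θ)

/-- The term `R_{L1}(t_s, t_e)`. -/
def RL1 {n : ℕ} (l : ℕ) (f : ℕ → ℝ → E n → E n)
    (Df : ℕ → ℝ → E n → (E n →L[ℝ] E n))
    (u : ℕ → ℝ → ℝ) (p : ℕ → ℝ) (ω₁ : ℝ) (x : ℝ → E n) (ts te : ℝ) : E n :=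
  ∑ i ∈ Finset.Icc 1 l, ∑ j ∈ Finset.Ioc i l,
    gammaCoeff p u i j ω₁ •
      ∫ θ in ts..te, (lieBracket f Df i j ts (x ts) - lieBracket f Df i j θ (x θ))

/-- The remainder `R_{T1}(t₀, t₁)`. -/
def RT1 {n : ℕ} (l : ℕ) (f : ℕ → ℝ → E n → E n)
    (Df : ℕ → ℝ → E n → (E n →L[ℝ] E n))
    (ft : ℕ → ℝ → E n → E n) (Lft : ℕ → ℕ → ℝ → E n → E n)
    (u : ℕ → ℝ → ℝ) (p : ℕ → ℝ) (ω₁ : ℝ) (x : ℝ → E n) (t₀ t₁ : ℝ) : E n :=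
  let T₁ : ℝ := 2 * π / ω₁
  let r : ℕ := ⌊(t₁ - t₀) / T₁⌋₊
  let tq : ℕ → ℝ := fun q => t₀ + (q : ℝ) * T₁
  (∑ q ∈ Finset.range r,
      (QV1 l ft u p ω₁ x (tq q) (tq (q+1)) + QV2 l Lft u p ω₁ x (tq q) (tq (q+1))
        + Q1 l f Df u p ω₁ x (tq q) (tq (q+1)) + RL1 l f Df u p ω₁ x (tq q) (tq (q+1))))
    - Iterm l f Df u p ω₁ x (tq r) t₁
    + QV1 l ft u p ω₁ x (tq r) t₁ + QV2 l Lft u p ω₁ x (tq r) t₁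
    + Q1 l f Df u p ω₁ x (tq r) t₁ + Q1T l f Df u p ω₁ x (tq r) t₁
    + Hterm l f Df u p ω₁ x (tq r) t₁

end

/-! Each summand of `R_{L1}` integrates a function of `θ` that vanishes at `θ = t_s` and grows at
most linearly: `[f_i, f_j]` is `4L²‖y‖`-Lipschitz in time and `2L`-Lipschitz in space, and the
solution of (S) has speed at most `L Λ₁ ‖x₀‖ (1 + l ω₁^{p′})`. Over an interval of length at most
`T₁` this gives `O(L² Λ₁ ‖x₀‖ ω₁^{p′} T₁²)`, while `|γ_{ij}(ω₁)| ≤ π ω₁^{p_i + p_j - 1}`. When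
`p_i + p_j ≤ 1` the product is `O(ω₁^{p′-1} T₁)`; otherwise the interaction condition makes the
summand vanish. -/

open Set intervalIntegral

lemma norm_sum_Icc_sum_Ioc_le {F : Type*} [SeminormedAddCommGroup F] {l : ℕ} {v : ℕ → ℕ → F}
    {B : ℝ} (hB : 0 ≤ B)
    (hv : ∀ i ∈ Finset.Icc 1 l, ∀ j ∈ Finset.Ioc i l, ‖v i j‖ ≤ B) :
    ‖∑ i ∈ Finset.Icc 1 l, ∑ j ∈ Finset.Ioc i l, v i j‖ ≤ (l : ℝ) ^ 2 * B := by
  have hrow : ∀ i ∈ Finset.Icc 1 l, ‖∑ j ∈ Finset.Ioc i l, v i j‖ ≤ l * B := fun i hi => by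
    refine (norm_sum_le_of_le _ (hv i hi)).trans ?_
    rw [Finset.sum_const, Nat.card_Ioc, nsmul_eq_mul]
    gcongr
    exact_mod_cast Nat.sub_le l i
  refine (norm_sum_le_of_le _ hrow).trans ?_
  rw [Finset.sum_const, Nat.card_Icc, nsmul_eq_mul, Nat.add_sub_cancel]
  exact (by ring : (l : ℝ) * (l * B) = l ^ 2 * B).le

section General

variable {F : Type*} [NormedAddCommGroup F] [NormedSpace ℝ F]

lemma norm_integral_le_of_norm_le_mul_sub {g : ℝ → F} {a b K : ℝ} (hab : a ≤ b)
    (hg : ∀ θ ∈ Icc a b, ‖g θ‖ ≤ K * (θ - a)) :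
    ‖∫ θ in a..b, g θ‖ ≤ K * (b - a) ^ 2 / 2 := by
  have hint : ∫ θ in a..b, K * (θ - a) = K * (b - a) ^ 2 / 2 := by
    simp only [intervalIntegral.integral_const_mul, intervalIntegral.integral_comp_sub_right
      (fun θ => θ), integral_id, sub_self]
    ring
  rw [← hint]
  refine norm_integral_le_of_norm_le hab (Filter.Eventually.of_forall fun θ hθ => ?_)
    ((by fun_prop : Continuous fun θ => K * (θ - a)).intervalIntegrable a b)
  exact hg θ (Ioc_subset_Icc_self hθ)

lemma norm_sub_le_of_eq_integral {x G : ℝ → F} {t₀ t₁ M : ℝ}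
    (hG : IntegrableOn G (Icc t₀ t₁)) (hGM : ∀ τ ∈ Icc t₀ t₁, ‖G τ‖ ≤ M)
    (hx : ∀ t ∈ Icc t₀ t₁, x t = x t₀ + ∫ τ in t₀..t, G τ) {a b : ℝ}
    (ha : a ∈ Icc t₀ t₁) (hb : b ∈ Icc t₀ t₁) :
    ‖x b - x a‖ ≤ M * |b - a| := by
  have hint : ∀ c ∈ Icc t₀ t₁, IntervalIntegrable G volume t₀ c := fun c hc =>
    (hG.mono_set (uIcc_subset_Icc (left_mem_Icc.2 (hc.1.trans hc.2)) hc)).intervalIntegrable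
  rw [hx b hb, hx a ha, add_sub_add_left_eq_sub,
    integral_interval_sub_left (hint b hb) (hint a ha)]
  exact norm_integral_le_of_norm_le_const fun τ hτ =>
    hGM τ (uIcc_subset_Icc ha hb (uIoc_subset_uIcc hτ))

end General

section VectorFields

variable {n : ℕ} {L : ℝ}

lemma RegVF.norm_le {g : ℝ → E n → E n} (hg : RegVF L g) (t : ℝ) (y : E n) :
    ‖g t y‖ ≤ L * ‖y‖ := by
  simpa [hg.2.2 t] using hg.2.1 t y 0

lemma RegVF.continuousOn_comp {g : ℝ → E n → E n} (hg : RegVF L g) {x : ℝ → E n} {s : Set ℝ}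
    (hx : ContinuousOn x s) : ContinuousOn (fun τ => g τ (x τ)) s := by
  have hjoint : Continuous fun q : ℝ × E n => g q.1 q.2 :=
    continuous_prod_of_continuous_lipschitzWith' _ (Real.toNNReal L)
      (fun t => LipschitzWith.of_dist_le' fun a b => by simpa [dist_eq_norm] using hg.2.1 t a b)
      hg.1
  exact hjoint.comp_continuousOn (continuousOn_id.prodMk hx)

lemma RegVF.norm_le_of_hasFDerivAt {g : ℝ → E n → E n} (hg : RegVF L g) (hL : 0 ≤ L)
    {t : ℝ} {y : E n} {D : E n →L[ℝ] E n} (hD : HasFDerivAt (g t) D y) : ‖D‖ ≤ L :=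
  hD.le_of_lip' hL (.of_forall fun z => hg.2.1 t z y)

lemma sub_eq_integral_of_hasDerivAt {g g' : ℝ → E n → E n} (hg' : RegVF L g')
    (hd : ∀ y t, HasDerivAt (fun s => g s y) (g' t y) t) (y : E n) (s t : ℝ) :
    g t y - g s y = ∫ σ in s..t, g' σ y :=
  (integral_eq_sub_of_hasDerivAt (fun σ _ => hd y σ) ((hg'.1 y).intervalIntegrable s t)).symm

lemma norm_sub_le_of_hasDerivAt {g g' : ℝ → E n → E n} (hg' : RegVF L g')
    (hd : ∀ y t, HasDerivAt (fun s => g s y) (g' t y) t) (y : E n) (s t : ℝ) :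
    ‖g t y - g s y‖ ≤ L * ‖y‖ * |t - s| := by
  rw [sub_eq_integral_of_hasDerivAt hg' hd]
  exact norm_integral_le_of_norm_le_const fun σ _ => hg'.norm_le σ y

lemma norm_sub_sub_sub_le_of_hasDerivAt {g g' : ℝ → E n → E n} (hg' : RegVF L g')
    (hd : ∀ y t, HasDerivAt (fun s => g s y) (g' t y) t) (s t : ℝ) (a b : E n) :
    ‖(g t a - g s a) - (g t b - g s b)‖ ≤ L * |t - s| * ‖a - b‖ := by
  rw [sub_eq_integral_of_hasDerivAt hg' hd, sub_eq_integral_of_hasDerivAt hg' hd,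
    ← integral_sub ((hg'.1 a).intervalIntegrable s t) ((hg'.1 b).intervalIntegrable s t)]
  refine (norm_integral_le_of_norm_le_const fun σ _ => hg'.2.1 σ a b).trans_eq ?_
  ring

lemma norm_sub_le_of_hasFDerivAt_of_hasDerivAt {g g' : ℝ → E n → E n}
    {Dg : ℝ → E n → (E n →L[ℝ] E n)} (hg' : RegVF L g') (hL : 0 ≤ L)
    (hd : ∀ y t, HasDerivAt (fun s => g s y) (g' t y) t)
    (hDg : ∀ t y, HasFDerivAt (g t) (Dg t y) y) (s t : ℝ) (y : E n) :
    ‖Dg t y - Dg s y‖ ≤ L * |t - s| :=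
  ((hDg t y).sub (hDg s y)).le_of_lip' (by positivity)
    (.of_forall fun z => norm_sub_sub_sub_le_of_hasDerivAt hg' hd s t z y)

end VectorFields

noncomputable def systemField {n : ℕ} (l : ℕ) (f : ℕ → ℝ → E n → E n) (u : ℕ → ℝ → ℝ) (p : ℕ → ℝ)
    (ω τ : ℝ) (y : E n) : E n :=
  f 0 τ y + ∑ i ∈ Finset.Icc 1 l, (ω ^ p i * u i (ω * τ)) • f i τ y

namespace Hyps

variable {n l : ℕ} {f : ℕ → ℝ → E n → E n} {Df : ℕ → ℝ → E n → (E n →L[ℝ] E n)}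
  {ft : ℕ → ℝ → E n → E n} {Lft : ℕ → ℕ → ℝ → E n → E n}
  {DLf : ℕ → ℕ → ℝ → E n → (E n →L[ℝ] E n)} {u : ℕ → ℝ → ℝ} {p : ℕ → ℝ} {L : ℝ}

lemma norm_lieDeriv_sub_time_le (hyp : Hyps l f Df ft Lft DLf u p L) {a b : ℕ} (ha : a ≤ l)
    (hb : b ≤ l) (y : E n) (s t : ℝ) :
    ‖lieDeriv f Df a b t y - lieDeriv f Df a b s y‖ ≤ 2 * L ^ 2 * ‖y‖ * |t - s| := by
  have hsplit : lieDeriv f Df a b t y - lieDeriv f Df a b s y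
      = Df b t y (f a t y - f a s y) + (Df b t y - Df b s y) (f a s y) := by
    simp only [lieDeriv, map_sub, sub_apply]; abel
  have hL := hyp.hLpos.le
  rw [hsplit]
  calc _ ≤ ‖Df b t y‖ * ‖f a t y - f a s y‖ + ‖Df b t y - Df b s y‖ * ‖f a s y‖ :=
        norm_add_le_of_le ((Df b t y).le_opNorm _) ((Df b t y - Df b s y).le_opNorm _)
    _ ≤ L * (L * ‖y‖ * |t - s|) + L * |t - s| * (L * ‖y‖) := by
        gcongr
        · exact (hyp.hreg_f b hb).norm_le_of_hasFDerivAt hL (hyp.hDf b hb t y)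
        · exact norm_sub_le_of_hasDerivAt (hyp.hreg_ft a ha) (hyp.hft a ha) y s t
        · exact norm_sub_le_of_hasFDerivAt_of_hasDerivAt (hyp.hreg_ft b hb) hL (hyp.hft b hb)
            (hyp.hDf b hb) s t y
        · exact (hyp.hreg_f a ha).norm_le s y
    _ = 2 * L ^ 2 * ‖y‖ * |t - s| := by ring

lemma norm_lieBracket_sub_time_le (hyp : Hyps l f Df ft Lft DLf u p L) {i j : ℕ} (hi : i ≤ l)
    (hj : j ≤ l) (y : E n) (s t : ℝ) :
    ‖lieBracket f Df i j t y - lieBracket f Df i j s y‖ ≤ 4 * L ^ 2 * ‖y‖ * |t - s| := by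
  have hsplit : lieBracket f Df i j t y - lieBracket f Df i j s y
      = (lieDeriv f Df i j t y - lieDeriv f Df i j s y)
        - (lieDeriv f Df j i t y - lieDeriv f Df j i s y) := by
    simp only [lieBracket]; abel
  rw [hsplit]
  refine (norm_sub_le_of_le (hyp.norm_lieDeriv_sub_time_le hi hj y s t)
    (hyp.norm_lieDeriv_sub_time_le hj hi y s t)).trans_eq ?_
  ring

lemma norm_lieBracket_sub_space_le (hyp : Hyps l f Df ft Lft DLf u p L) {i j : ℕ} (hi : i ≤ l)
    (hj : j ≤ l) (t : ℝ) (a b : E n) :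
    ‖lieBracket f Df i j t a - lieBracket f Df i j t b‖ ≤ 2 * L * ‖a - b‖ := by
  have hsplit : lieBracket f Df i j t a - lieBracket f Df i j t b
      = (lieDeriv f Df i j t a - lieDeriv f Df i j t b)
        - (lieDeriv f Df j i t a - lieDeriv f Df j i t b) := by
    simp only [lieBracket]; abel
  rw [hsplit]
  refine (norm_sub_le_of_le ((hyp.hreg_Lf j i hj hi).2.1 t a b)
    ((hyp.hreg_Lf i j hi hj).2.1 t a b)).trans_eq ?_
  ring

lemma norm_systemField_le (hyp : Hyps l f Df ft Lft DLf u p L) {ω p' : ℝ} (hω : 1 ≤ ω)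
    (hp' : ∀ i, 1 ≤ i → i ≤ l → p i ≤ p') (τ : ℝ) (y : E n) :
    ‖systemField l f u p ω τ y‖ ≤ L * ‖y‖ * (1 + l * ω ^ p') := by
  have hterm : ∀ i ∈ Finset.Icc 1 l,
      ‖(ω ^ p i * u i (ω * τ)) • f i τ y‖ ≤ ω ^ p' * (L * ‖y‖) := by
    intro i hi
    obtain ⟨hi1, hil⟩ := Finset.mem_Icc.1 hi
    have hcoef : ‖ω ^ p i * u i (ω * τ)‖ ≤ ω ^ p' := by
      rw [norm_mul, Real.norm_of_nonneg (by positivity)]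
      calc ω ^ p i * ‖u i (ω * τ)‖ ≤ ω ^ p i * 1 := by gcongr; exact hyp.hubdd i hil _
        _ ≤ ω ^ p' := by rw [mul_one]; exact rpow_le_rpow_of_exponent_le hω (hp' i hi1 hil)
    rw [norm_smul]
    exact mul_le_mul hcoef ((hyp.hreg_f i hil).norm_le τ y) (norm_nonneg _) (by positivity)
  calc ‖systemField l f u p ω τ y‖ ≤ L * ‖y‖ + l * (ω ^ p' * (L * ‖y‖)) :=
        norm_add_le_of_le ((hyp.hreg_f 0 l.zero_le).norm_le τ y)
          ((norm_sum_le_of_le _ hterm).trans_eq (by simp))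
    _ = L * ‖y‖ * (1 + l * ω ^ p') := by ring

lemma integrableOn_systemField (hyp : Hyps l f Df ft Lft DLf u p L) (ω : ℝ) {x : ℝ → E n}
    {a b : ℝ} (hx : ContinuousOn x (Icc a b)) :
    IntegrableOn (fun τ => systemField l f u p ω τ (x τ)) (Icc a b) := by
  refine ((hyp.hreg_f 0 l.zero_le).continuousOn_comp hx).integrableOn_Icc.add
    (integrable_finsetSum _ fun i hi => ?_)
  have hil := (Finset.mem_Icc.1 hi).2
  refine ((hyp.hreg_f i hil).continuousOn_comp hx).integrableOn_Icc.bdd_smul ‖ω ^ p i‖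
    (measurable_const.mul ((hyp.humeas i hil).comp
      (measurable_const_mul ω))).aestronglyMeasurable
    (Filter.Eventually.of_forall fun τ => ?_)
  change ‖ω ^ p i * u i (ω * τ)‖ ≤ _
  rw [norm_mul]
  exact mul_le_of_le_one_right (norm_nonneg _) (hyp.hubdd i hil _)

variable {ω p' C t₀ t₁ : ℝ} {x : ℝ → E n}

lemma norm_sub_le_of_isSSol (hyp : Hyps l f Df ft Lft DLf u p L)
    (hsol : IsSSol l f u p ω x (Icc t₀ t₁) t₀) (hω : 1 ≤ ω)
    (hp' : ∀ i, 1 ≤ i → i ≤ l → p i ≤ p') (hxb : ∀ t ∈ Icc t₀ t₁, ‖x t‖ ≤ C) {a b : ℝ}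
    (ha : a ∈ Icc t₀ t₁) (hb : b ∈ Icc t₀ t₁) :
    ‖x b - x a‖ ≤ L * C * (1 + l * ω ^ p') * |b - a| := by
  have hL := hyp.hLpos.le
  refine norm_sub_le_of_eq_integral (hyp.integrableOn_systemField ω hsol.1)
    (fun τ hτ => (hyp.norm_systemField_le hω hp' τ (x τ)).trans ?_) hsol.2 ha hb
  gcongr
  exact hxb τ hτ

lemma norm_integral_lieBracket_sub_le (hyp : Hyps l f Df ft Lft DLf u p L)
    (hsol : IsSSol l f u p ω x (Icc t₀ t₁) t₀) (hω : 1 ≤ ω)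
    (hp' : ∀ i, 1 ≤ i → i ≤ l → p i ≤ p') (hp'0 : 0 ≤ p') (hxb : ∀ t ∈ Icc t₀ t₁, ‖x t‖ ≤ C)
    {i j : ℕ} (hi : i ≤ l) (hj : j ≤ l) {s e : ℝ} (hs : s ∈ Icc t₀ t₁) (he : e ∈ Icc s t₁) :
    ‖∫ θ in s..e, (lieBracket f Df i j s (x s) - lieBracket f Df i j θ (x θ))‖
      ≤ (2 * l + 6) * L ^ 2 * C * ω ^ p' * (e - s) ^ 2 / 2 := by
  have hL := hyp.hLpos.le
  have hC : 0 ≤ C := (norm_nonneg _).trans (hxb s hs)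
  have hωp' : 1 ≤ ω ^ p' := one_le_rpow hω hp'0
  refine norm_integral_le_of_norm_le_mul_sub he.1 fun θ hθ => ?_
  have hθ₁ : θ ∈ Icc t₀ t₁ := ⟨hs.1.trans hθ.1, hθ.2.trans he.2⟩
  have hθs0 : 0 ≤ θ - s := sub_nonneg.2 hθ.1
  have hθs : |s - θ| = θ - s := by rw [abs_sub_comm, abs_of_nonneg hθs0]
  have htime := hyp.norm_lieBracket_sub_time_le hi hj (x s) θ s
  have hspace := hyp.norm_lieBracket_sub_space_le hi hj θ (x s) (x θ)
  have hsol_inc := hyp.norm_sub_le_of_isSSol hsol hω hp' hxb hθ₁ hs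
  rw [hθs] at htime hsol_inc
  calc _ ≤ ‖lieBracket f Df i j s (x s) - lieBracket f Df i j θ (x s)‖
          + ‖lieBracket f Df i j θ (x s) - lieBracket f Df i j θ (x θ)‖ :=
        norm_sub_le_norm_sub_add_norm_sub _ _ _
    _ ≤ 4 * L ^ 2 * C * (θ - s) + 2 * L * (L * C * (1 + l * ω ^ p') * (θ - s)) := by
        gcongr
        · exact htime.trans (by gcongr; exact hxb s hs)
        · exact hspace.trans (by gcongr)
    _ ≤ (2 * l + 6) * L ^ 2 * C * ω ^ p' * (θ - s) := by
        have : 0 ≤ L ^ 2 * C * (θ - s) := by positivity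
        nlinarith

end Hyps

lemma abs_gammaCoeff_le {p : ℕ → ℝ} {u : ℕ → ℝ → ℝ} {i j : ℕ} {ω : ℝ} (hω : 0 < ω)
    (hui : ∀ t, |u i t| ≤ 1) (huj : ∀ t, |u j t| ≤ 1) :
    |gammaCoeff p u i j ω| ≤ π * ω ^ (p i + p j) / ω := by
  have hinner : ∀ θ ∈ Icc 0 (2 * π / ω),
      ‖∫ τ in (0 : ℝ)..θ, u j (ω * θ) * u i (ω * τ)‖ ≤ 1 * (θ - 0) := fun θ hθ => by
    have h := norm_integral_le_of_norm_le_const (a := 0) (b := θ) (C := 1)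
      (f := fun τ => u j (ω * θ) * u i (ω * τ))
      fun τ _ => by rw [norm_mul]; exact mul_le_one₀ (huj _) (norm_nonneg _) (hui _)
    rwa [abs_of_nonneg (sub_nonneg.2 hθ.1)] at h
  have houter := norm_integral_le_of_norm_le_mul_sub (by positivity) hinner
  rw [Real.norm_eq_abs] at houter
  rw [gammaCoeff, abs_mul, abs_of_nonneg (by positivity)]
  calc _ ≤ ω ^ (p i + p j) / (2 * π / ω) * (1 * (2 * π / ω - 0) ^ 2 / 2) := by gcongr
    _ = π * ω ^ (p i + p j) / ω := by field_simp; ring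

lemma norm_gammaCoeff_smul_le {n l : ℕ} {f : ℕ → ℝ → E n → E n}
    {Df : ℕ → ℝ → E n → (E n →L[ℝ] E n)} {u : ℕ → ℝ → ℝ} {p : ℕ → ℝ}
    (hint : InteractionCondition l f Df u p) (hu : ∀ i, i ≤ l → ∀ t, |u i t| ≤ 1)
    {ω p' K : ℝ} (hω : 1 ≤ ω) (hK : 0 ≤ K)
    {i j : ℕ} (hi : i ∈ Finset.Icc 1 l) (hj : j ∈ Finset.Ioc i l) {v : E n}
    (hv : ‖v‖ ≤ K * ω ^ p' * (2 * π / ω) ^ 2 / 2)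
    (hbracket : (∀ t y, lieBracket f Df i j t y = 0) → v = 0) :
    ‖gammaCoeff p u i j ω • v‖ ≤ π ^ 2 * K * ω ^ (p' - 1) * (2 * π / ω) := by
  obtain ⟨hi1, hil⟩ := Finset.mem_Icc.1 hi
  obtain ⟨hij, hjl⟩ := Finset.mem_Ioc.1 hj
  have hω0 : 0 < ω := one_pos.trans_le hω
  by_cases hpp : p i + p j ≤ 1
  · have hexp : ω ^ (p i + p j) * ω ^ p' / ω ^ 2 ≤ ω ^ (p' - 1) := by
      rw [← rpow_add hω0, ← rpow_two, ← rpow_sub hω0]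
      exact rpow_le_rpow_of_exponent_le hω (by linarith)
    rw [norm_smul, Real.norm_eq_abs]
    calc _ ≤ π * ω ^ (p i + p j) / ω * (K * ω ^ p' * (2 * π / ω) ^ 2 / 2) :=
          mul_le_mul (abs_gammaCoeff_le hω0 (hu i hil) (hu j hjl)) hv (norm_nonneg _)
            (by positivity)
      _ = π ^ 2 * K * (ω ^ (p i + p j) * ω ^ p' / ω ^ 2) * (2 * π / ω) := by
          field_simp
      _ ≤ π ^ 2 * K * ω ^ (p' - 1) * (2 * π / ω) := by gcongr
  · rcases hint i j hi1 hil (hi1.trans hij.le) hjl (not_le.1 hpp) with hγ | hbr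
    · rw [hγ ω hω0, zero_smul, norm_zero]; positivity
    · rw [hbracket hbr, smul_zero, norm_zero]; positivity

theorem bound_RL1_general
    {n : ℕ} (l : ℕ)
    (f : ℕ → ℝ → E n → E n)
    (Df : ℕ → ℝ → E n → (E n →L[ℝ] E n))
    (ft : ℕ → ℝ → E n → E n)
    (Lft : ℕ → ℕ → ℝ → E n → E n)
    (DLf : ℕ → ℕ → ℝ → E n → (E n →L[ℝ] E n))
    (u : ℕ → ℝ → ℝ) (p : ℕ → ℝ) (L : ℝ)
    (hyp : Hyps l f Df ft Lft DLf u p L)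
    (hint : InteractionCondition l f Df u p)
    -- setup: a bounded solution of (S) with frequency `ω₁ ≥ 1` on `[t₀, t₁]`
    (t₀ t₁ ω₁ Λ₁ : ℝ) (x₀ : E n) (x : ℝ → E n)
    (hω₁ : 1 ≤ ω₁)
    (hsol : IsSSol l f u p ω₁ x (Set.Icc t₀ t₁) t₀)
    (hxb : ∀ t ∈ Set.Icc t₀ t₁, ‖x t‖ ≤ Λ₁ * ‖x₀‖)
    -- `p′ = max_{1 ≤ i ≤ l} p i`
    (p' : ℝ)
    (hp'ub : ∀ i, 1 ≤ i → i ≤ l → p i ≤ p')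
    (hp'mem : ∃ i, 1 ≤ i ∧ i ≤ l ∧ p i = p')
    -- `t_s ∈ [t₀, t_r]` and `t_e ∈ [t_s, min (t_s + T₁) t₁]`, where `T₁ = 2π/ω₁`
    (ts te : ℝ)
    (hts : ts ∈ Set.Icc t₀ (t₀ + (⌊(t₁ - t₀) / (2 * π / ω₁)⌋₊ : ℝ) * (2 * π / ω₁)))
    (hte : te ∈ Set.Icc ts (min (ts + 2 * π / ω₁) t₁)) :
    ‖RL1 l f Df u p ω₁ x ts te‖
      ≤ 2 * π ^ 2 * ((l : ℝ) + 1) ^ 3 * L ^ 2 * Λ₁ * ‖x₀‖ * ω₁ ^ (p' - 1) * (2 * π / ω₁) := by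
  obtain ⟨i₀, hi₀, hi₀l, rfl⟩ := hp'mem
  have hte₁ : te ∈ Icc ts t₁ := ⟨hte.1, hte.2.trans (min_le_right _ _)⟩
  have hts₁ : ts ∈ Icc t₀ t₁ := ⟨hts.1, hte₁.1.trans hte₁.2⟩
  have hC : 0 ≤ Λ₁ * ‖x₀‖ := (norm_nonneg _).trans (hxb ts hts₁)
  have hlen : (te - ts) ^ 2 ≤ (2 * π / ω₁) ^ 2 := by
    have := hte.2.trans (min_le_left _ _)
    gcongr <;> linarith [hte.1]
  have hterm : ∀ i ∈ Finset.Icc 1 l, ∀ j ∈ Finset.Ioc i l,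
      ‖gammaCoeff p u i j ω₁ •
        ∫ θ in ts..te, (lieBracket f Df i j ts (x ts) - lieBracket f Df i j θ (x θ))‖
        ≤ π ^ 2 * ((2 * l + 6) * L ^ 2 * (Λ₁ * ‖x₀‖)) * ω₁ ^ (p i₀ - 1) * (2 * π / ω₁) :=
    fun i hi j hj => norm_gammaCoeff_smul_le hint hyp.hubdd hω₁ (by positivity) hi hj
      ((hyp.norm_integral_lieBracket_sub_le hsol hω₁ hp'ub (hyp.hp i₀ hi₀ hi₀l).1.le hxb
        (Finset.mem_Icc.1 hi).2 (Finset.mem_Ioc.1 hj).2 hts₁ hte₁).trans (by gcongr))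
      fun hbr => by simp [hbr]
  refine (norm_sum_Icc_sum_Ioc_le (by positivity) hterm).trans ?_
  have hl : (l : ℝ) ^ 2 * (2 * l + 6) ≤ 2 * (l + 1) ^ 3 := by nlinarith [l.cast_nonneg (α := ℝ)]
  calc _ = (l : ℝ) ^ 2 * (2 * l + 6) * (π ^ 2 * L ^ 2 * (Λ₁ * ‖x₀‖) * ω₁ ^ (p i₀ - 1)
          * (2 * π / ω₁)) := by ring
    _ ≤ 2 * (l + 1) ^ 3 * (π ^ 2 * L ^ 2 * (Λ₁ * ‖x₀‖) * ω₁ ^ (p i₀ - 1) * (2 * π / ω₁)) := by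
        gcongr
    _ = _ := by ring

/-- **Bound on `R_{L1}`** (Lemma 13). -/
theorem bound_RL1
    {n : ℕ} (l : ℕ)
    (f : ℕ → ℝ → E n → E n)
    (Df : ℕ → ℝ → E n → (E n →L[ℝ] E n))
    (ft : ℕ → ℝ → E n → E n)
    (Lft : ℕ → ℕ → ℝ → E n → E n)
    (DLf : ℕ → ℕ → ℝ → E n → (E n →L[ℝ] E n))
    (u : ℕ → ℝ → ℝ) (p : ℕ → ℝ) (L : ℝ)
    (hyp : Hyps l f Df ft Lft DLf u p L)
    (hint : InteractionCondition l f Df u p)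
    -- setup: a bounded solution of (S) with frequency `ω₁ ≥ 1` on `[t₀, t₁]`
    (t₀ t₁ ω₁ Λ₁ : ℝ) (x₀ : E n) (x : ℝ → E n)
    (h01 : t₀ < t₁) (hω₁ : 1 ≤ ω₁) (hΛ₁ : 1 ≤ Λ₁)
    (hx0 : x t₀ = x₀)
    (hsol : IsSSol l f u p ω₁ x (Set.Icc t₀ t₁) t₀)
    (hxb : ∀ t ∈ Set.Icc t₀ t₁, ‖x t‖ ≤ Λ₁ * ‖x₀‖)
    -- `p′ = max_{1 ≤ i ≤ l} p i`
    (p' : ℝ)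
    (hp'ub : ∀ i, 1 ≤ i → i ≤ l → p i ≤ p')
    (hp'mem : ∃ i, 1 ≤ i ∧ i ≤ l ∧ p i = p')
    -- `t_s ∈ [t₀, t_r]` and `t_e ∈ [t_s, min (t_s + T₁) t₁]`, where `T₁ = 2π/ω₁`
    (ts te : ℝ)
    (hts : ts ∈ Set.Icc t₀ (t₀ + (⌊(t₁ - t₀) / (2 * π / ω₁)⌋₊ : ℝ) * (2 * π / ω₁)))
    (hte : te ∈ Set.Icc ts (min (ts + 2 * π / ω₁) t₁)) :
    ‖RL1 l f Df u p ω₁ x ts te‖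
      ≤ 2 * π ^ 2 * ((l : ℝ) + 1) ^ 3 * L ^ 2 * Λ₁ * ‖x₀‖ * ω₁ ^ (p' - 1) * (2 * π / ω₁) :=
  bound_RL1_general l f Df ft Lft DLf u p L hyp hint t₀ t₁ ω₁ Λ₁ x₀ x hω₁ hsol hxb p' hp'ub hp'mem
    ts te hts hte
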